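/- arXiv:nlin/0610004 — 3 statements merged into one kernel-verified Lean document; each statement's English description precedes it below -/
import Mathlib

section
/- Let A ∈ SL(2,ℝ) be written as A = Q' D Q^{-1} where D = diag(e^Λ, e^{−Λ}) with Λ ≥ λ_min t > 0, and Q, Q' ∈ SL(2,ℝ) satisfy Q'^{-1} Q = I + ε B with all entries of B bounded by 1 in absolute value. Then |det(A − I)| ≥ 2(1−ε)(cosh(λ_min t) − 1) − 3ε. In particular, for ε small enough (depending only on λ_min t), det(A − I) ≠ 0. -/
lemma scalar_key (E F u v p c ε : ℝ) (hE : 1 < E) (hEF : E * F = 1) (hF : 0 < F)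
    (hu : |u - (E - 1)| ≤ ε) (hv : |v - (1 - F)| ≤ ε) (hp : |p| ≤ ε ^ 2)
    (hc1 : 1 < c) (hc' : c ≤ (E + F) / 2) (hε : 0 ≤ ε) (hε1 : ε ≤ 1) :
    2 * (1 - ε) * (c - 1) - 3 * ε ≤ u * v + p := by
  rw [abs_le] at hu hv hp
  have hF1 : F < 1 := by nlinarith
  have hab : E - 1 ≥ 1 - F := by nlinarith [sq_nonneg (E - 1)]
  have hslack : E + F - 2 - 2 * (c - 1) ≥ 0 := by nlinarith
  have h1ε : (0:ℝ) ≤ 1 - ε := by linarith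
  rcases le_or_gt ε (1 - F) with hb | hb
  · have huv : (E - 1 - ε) * (1 - F - ε) ≤ u * v := by
      apply mul_le_mul (by linarith [hu.1]) (by linarith [hv.1]) (by linarith) (by linarith [hu.1, hb])
    nlinarith [mul_nonneg h1ε hslack, mul_nonneg hε hF.le]
  · have huv : (E - 1 + ε) * (1 - F - ε) ≤ u * v := by
      rcases le_or_gt 0 u with hu0 | hu0
      · calc (E - 1 + ε) * (1 - F - ε) ≤ u * (1 - F - ε) := by
              apply mul_le_mul_of_nonpos_right (by linarith [hu.2]) (by linarith)
          _ ≤ u * v := mul_le_mul_of_nonneg_left (by linarith [hv.1]) hu0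
      · calc (E - 1 + ε) * (1 - F - ε) ≤ (E - 1 - ε) * (1 - F + ε) := by nlinarith
          _ ≤ u * (1 - F + ε) := by
              apply mul_le_mul_of_nonneg_right (by linarith [hu.1]) (by linarith)
          _ ≤ u * v := mul_le_mul_of_nonpos_left (by linarith [hv.2]) hu0.le
    nlinarith [mul_nonneg h1ε hslack, mul_nonneg hε (by linarith : (0:ℝ) ≤ 1 - ε)]

/-- If `A = Q' D Q⁻¹` with `D = diag(e^Λ, e^{−Λ})`, `Λ ≥ λ_min t > 0`,
`Q'⁻¹ Q = I + ε B` with `|B_{ij}| ≤ 1`, then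
`|det(A − I)| ≥ 2(1−ε)(cosh(λ_min t) − 1) − 3ε`; in particular when this lower bound is
positive (ε small enough), `det(A − I) ≠ 0`. -/
theorem det_lower_bound_hyperbolic
    (A Q Q' B : Matrix (Fin 2) (Fin 2) ℝ) (Λ lammin t ε : ℝ)
    (hA : A.det = 1) (hQ : Q.det = 1) (hQ' : Q'.det = 1)
    (hΛ : lammin * t ≤ Λ) (hpos : 0 < lammin * t) (hε : 0 ≤ ε)
    (hfact : A = Q' * Matrix.diagonal ![Real.exp Λ, Real.exp (-Λ)] * Q⁻¹)
    (hQQ : Q'⁻¹ * Q = 1 + ε • B) (hB : ∀ i j, |B i j| ≤ 1) :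
    2 * (1 - ε) * (Real.cosh (lammin * t) - 1) - 3 * ε ≤ |(A - 1).det| ∧
    (0 < 2 * (1 - ε) * (Real.cosh (lammin * t) - 1) - 3 * ε → (A - 1).det ≠ 0) := by
  have hΛ0 : 0 < Λ := lt_of_lt_of_le hpos hΛ
  set D := Matrix.diagonal ![Real.exp Λ, Real.exp (-Λ)] with hD
  have hQu : IsUnit Q.det := by simp [hQ]
  have hQ'u : IsUnit Q'.det := by simp [hQ']
  have key : A - 1 = Q' * (D - Q'⁻¹ * Q) * Q⁻¹ := by
    rw [hfact, Matrix.mul_sub, Matrix.sub_mul, ← Matrix.mul_assoc,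
      Matrix.mul_nonsing_inv Q' hQ'u, Matrix.one_mul, Matrix.mul_nonsing_inv Q hQu]
  have hdet : (A - 1).det = (D - (1 + ε • B)).det := by
    rw [key, Matrix.det_mul, Matrix.det_mul, hQ', Matrix.det_nonsing_inv, hQ, hQQ]
    simp
  have hexp : -(A - 1).det = (Real.exp Λ - 1 - ε * B 0 0) * (1 - Real.exp (-Λ) + ε * B 1 1)
      + (ε * B 0 1) * (ε * B 1 0) := by
    rw [hdet, Matrix.det_fin_two]
    simp [hD, Matrix.diagonal]
    ring
  have hE : 1 < Real.exp Λ := by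
    rw [← Real.exp_zero]; exact Real.exp_lt_exp.2 hΛ0
  have hEF : Real.exp Λ * Real.exp (-Λ) = 1 := by
    rw [← Real.exp_add]; simp
  have hF : 0 < Real.exp (-Λ) := Real.exp_pos _
  have hc1 : 1 < Real.cosh (lammin * t) := by
    rw [← Real.cosh_zero]
    exact Real.cosh_lt_cosh.2 (by simpa [abs_of_pos hpos] using hpos)
  have hc' : Real.cosh (lammin * t) ≤ (Real.exp Λ + Real.exp (-Λ)) / 2 := by
    rw [← Real.cosh_eq]
    exact Real.cosh_le_cosh.2 (by rw [abs_of_pos hpos, abs_of_pos hΛ0]; exact hΛ)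
  have hmain : 2 * (1 - ε) * (Real.cosh (lammin * t) - 1) - 3 * ε ≤ |(A - 1).det| := by
    rcases le_or_gt ε 1 with hε1 | hε1
    · have hu : |(Real.exp Λ - 1 - ε * B 0 0) - (Real.exp Λ - 1)| ≤ ε := by
        have := hB 0 0
        rw [show (Real.exp Λ - 1 - ε * B 0 0) - (Real.exp Λ - 1) = -(ε * B 0 0) by ring,
          abs_neg, abs_mul, abs_of_nonneg hε]
        nlinarith [abs_nonneg (B 0 0)]
      have hv : |(1 - Real.exp (-Λ) + ε * B 1 1) - (1 - Real.exp (-Λ))| ≤ ε := by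
        have := hB 1 1
        rw [show (1 - Real.exp (-Λ) + ε * B 1 1) - (1 - Real.exp (-Λ)) = ε * B 1 1 by ring,
          abs_mul, abs_of_nonneg hε]
        nlinarith [abs_nonneg (B 1 1)]
      have hp : |(ε * B 0 1) * (ε * B 1 0)| ≤ ε ^ 2 := by
        have h1 := hB 0 1; have h2 := hB 1 0
        rw [abs_mul, abs_mul, abs_mul, abs_of_nonneg hε]
        have e1 : ε * |B 0 1| ≤ ε := by nlinarith [abs_nonneg (B 0 1)]
        have e2 : ε * |B 1 0| ≤ ε := by nlinarith [abs_nonneg (B 1 0)]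
        calc ε * |B 0 1| * (ε * |B 1 0|) ≤ ε * (ε * |B 1 0|) :=
              mul_le_mul_of_nonneg_right e1 (mul_nonneg hε (abs_nonneg _))
          _ ≤ ε * ε := mul_le_mul_of_nonneg_left e2 hε
          _ = ε ^ 2 := (sq ε).symm
      have := scalar_key (Real.exp Λ) (Real.exp (-Λ))
        (Real.exp Λ - 1 - ε * B 0 0) (1 - Real.exp (-Λ) + ε * B 1 1)
        ((ε * B 0 1) * (ε * B 1 0)) (Real.cosh (lammin * t)) ε
        hE hEF hF hu hv hp hc1 hc' hε hε1
      calc 2 * (1 - ε) * (Real.cosh (lammin * t) - 1) - 3 * ε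
          ≤ -(A - 1).det := by rw [hexp]; exact this
        _ ≤ |(A - 1).det| := neg_le_abs _
    · have := abs_nonneg ((A - 1).det)
      nlinarith
  refine ⟨hmain, fun h => ?_⟩
  exact abs_pos.mp (lt_of_lt_of_le h hmain)
end

section
/- For the Moyal star product with parameter ħ on polynomials in (q,p), one has (qp) ⋆ (qp)^j = (qp)^{j+1} + ħ² (j²/4) (qp)^{j−1} for all j ≥ 1. -/
open MvPolynomial

/-- `k`-fold partial derivative in variable `i` of a polynomial symbol in `(q,p)`. -/
noncomputable def pdIter (i : Fin 2) (k : ℕ) (A : MvPolynomial (Fin 2) ℂ) :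
    MvPolynomial (Fin 2) ℂ :=
  (fun B => MvPolynomial.pderiv i B)^[k] A

/-- The bidifferential operator `A 𝒟ⁿ B`, where
`𝒟 = ∂_p ⊗ ∂_q − ∂_q ⊗ ∂_p` (variable `0` is `q`, variable `1` is `p`). -/
noncomputable def moyalD (n : ℕ) (A B : MvPolynomial (Fin 2) ℂ) :
    MvPolynomial (Fin 2) ℂ :=
  ∑ k ∈ Finset.range (n + 1),
    ((-1 : ℂ) ^ k * (n.choose k : ℂ)) •
      (pdIter 0 k (pdIter 1 (n - k) A) * pdIter 1 k (pdIter 0 (n - k) B))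

/-- The Moyal star product `A ⋆ B = ∑ₙ (ihbar)ⁿ/(2ⁿ n!) (A𝒟ⁿB)`; for polynomials the sum
terminates since `A𝒟ⁿB = 0` for `n > totalDegree A`. -/
noncomputable def moyal (hbar : ℝ) (A B : MvPolynomial (Fin 2) ℂ) :
    MvPolynomial (Fin 2) ℂ :=
  ∑ n ∈ Finset.range (A.totalDegree + 1),
    ((Complex.I * (hbar : ℂ)) ^ n / ((2 : ℂ) ^ n * (n.factorial : ℂ))) • moyalD n A B

/-! Since `qp` has total degree 2, the star product stops at order `ħ²`. The first-order term
vanishes because `q ∂_q` and `p ∂_p` both act on `(qp)^j` as multiplication by `j` (Euler's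
identity), and at second order only the mixed term survives, contributing
`∂_p ∂_q (qp)^j = j² (qp)^(j-1)`. -/

section Euler

variable {σ R : Type*} [CommSemiring R] {i k : σ}

lemma pderiv_X_mul_X_left (h : i ≠ k) : pderiv i (X i * X k : MvPolynomial σ R) = X k := by
  rw [pderiv_mul, pderiv_X_self, pderiv_X_of_ne h.symm, mul_zero, add_zero, one_mul]

lemma pderiv_X_mul_X_right (h : i ≠ k) : pderiv k (X i * X k : MvPolynomial σ R) = X i := by
  rw [mul_comm, pderiv_X_mul_X_left h.symm]

lemma X_mul_pderiv_pow_X_mul_X_left (h : i ≠ k) (n : ℕ) :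
    X i * pderiv i ((X i * X k : MvPolynomial σ R) ^ n) = n • (X i * X k) ^ n := by
  rw [Derivation.leibniz_pow, pderiv_X_mul_X_left h]
  cases n with
  | zero => simp
  | succ m => simp only [smul_eq_mul, mul_smul_comm, Nat.add_sub_cancel, pow_succ]; ring_nf

lemma X_mul_pderiv_pow_X_mul_X_right (h : i ≠ k) (n : ℕ) :
    X k * pderiv k ((X i * X k : MvPolynomial σ R) ^ n) = n • (X i * X k) ^ n := by
  rw [mul_comm (X i)]
  exact X_mul_pderiv_pow_X_mul_X_left h.symm n

lemma pderiv_pderiv_pow_X_mul_X (h : i ≠ k) (n : ℕ) :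
    pderiv k (pderiv i ((X i * X k : MvPolynomial σ R) ^ n)) =
      (n ^ 2) • (X i * X k) ^ (n - 1) := by
  rw [Derivation.leibniz_pow, pderiv_X_mul_X_left h, smul_eq_mul, map_nsmul, pderiv_mul,
    pderiv_X_self, mul_comm _ (X k), X_mul_pderiv_pow_X_mul_X_right h]
  cases n with
  | zero => simp
  | succ m => simp only [Nat.add_sub_cancel, mul_one, ← succ_nsmul, smul_smul]; ring_nf

end Euler

section Moyal

variable (A B : MvPolynomial (Fin 2) ℂ)

lemma moyalD_zero : moyalD 0 A B = A * B := by
  simp [moyalD, pdIter]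

lemma moyalD_one : moyalD 1 A B = pderiv 1 A * pderiv 0 B - pderiv 0 A * pderiv 1 B := by
  simp [moyalD, pdIter, Finset.sum_range_succ, sub_eq_add_neg]

lemma moyalD_two :
    moyalD 2 A B = pderiv 1 (pderiv 1 A) * pderiv 0 (pderiv 0 B)
      - 2 * (pderiv 0 (pderiv 1 A) * pderiv 1 (pderiv 0 B))
      + pderiv 0 (pderiv 0 A) * pderiv 1 (pderiv 1 B) := by
  simp [moyalD, pdIter, Finset.sum_range_succ, sub_eq_add_neg, two_smul, two_mul]

lemma moyal_of_totalDegree_eq_two (hbar : ℝ) (hA : A.totalDegree = 2) :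
    moyal hbar A B = A * B + C (Complex.I * hbar / 2) * moyalD 1 A B
      - C ((hbar : ℂ) ^ 2 / 8) * moyalD 2 A B := by
  have hcoeff : (Complex.I * hbar) ^ 2 / 8 = -((hbar : ℂ) ^ 2 / 8) := by
    rw [mul_pow, Complex.I_sq]; ring
  simp only [moyal, hA, Finset.sum_range_succ, Finset.sum_range_zero, moyalD_zero, smul_eq_C_mul]
  norm_num [hcoeff, sub_eq_add_neg]

end Moyal

lemma moyalD_one_X_mul_X_pow (j : ℕ) :
    moyalD 1 (X 0 * X 1) ((X 0 * X 1 : MvPolynomial (Fin 2) ℂ) ^ j) = 0 := by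
  have h01 : (0 : Fin 2) ≠ 1 := by decide
  rw [moyalD_one, pderiv_X_mul_X_right h01, pderiv_X_mul_X_left h01,
    X_mul_pderiv_pow_X_mul_X_left h01, X_mul_pderiv_pow_X_mul_X_right h01, sub_self]

lemma moyalD_two_X_mul_X_pow (j : ℕ) :
    moyalD 2 (X 0 * X 1) ((X 0 * X 1 : MvPolynomial (Fin 2) ℂ) ^ j)
      = C (-2 * (j : ℂ) ^ 2) * (X 0 * X 1) ^ (j - 1) := by
  rw [moyalD_two, pderiv_pderiv_pow_X_mul_X (by decide)]
  simp [nsmul_eq_mul, mul_assoc, map_ofNat]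

theorem moyal_qp_pow_general (hbar : ℝ) (j : ℕ) :
    moyal hbar (X 0 * X 1) ((X 0 * X 1 : MvPolynomial (Fin 2) ℂ) ^ j)
      = (X 0 * X 1) ^ (j + 1)
        + MvPolynomial.C ((hbar : ℂ) ^ 2 * (j : ℂ) ^ 2 / 4) * (X 0 * X 1) ^ (j - 1) := by
  have hdeg : (X 0 * X 1 : MvPolynomial (Fin 2) ℂ).totalDegree = 2 := by
    rw [totalDegree_mul_of_isDomain (X_ne_zero _) (X_ne_zero _), totalDegree_X, totalDegree_X]
  rw [moyal_of_totalDegree_eq_two _ _ _ hdeg, moyalD_one_X_mul_X_pow, moyalD_two_X_mul_X_pow,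
    mul_zero, add_zero, ← pow_succ', ← mul_assoc, ← map_mul, sub_eq_add_neg, ← neg_mul, ← map_neg]
  congr 3
  ring

/-- `(qp) ⋆ (qp)^j = (qp)^{j+1} + hbar²(j²/4)(qp)^{j−1}` for `j ≥ 1`. -/
theorem moyal_qp_pow (hbar : ℝ) (j : ℕ) (hj : 1 ≤ j) :
    moyal hbar (X 0 * X 1) ((X 0 * X 1 : MvPolynomial (Fin 2) ℂ) ^ j)
      = (X 0 * X 1) ^ (j + 1)
        + MvPolynomial.C ((hbar : ℂ) ^ 2 * (j : ℂ) ^ 2 / 4) * (X 0 * X 1) ^ (j - 1) :=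
  moyal_qp_pow_general hbar j
end

section
/- Define numbers E_{j,m} by the recursion E_{j+1,m} = E_{j,m} − (j²/4) E_{j−1,m−1} for j, m ≥ 1, with E_{j,0} = 1 for all j, and E_{0,m} = E_{1,m} = 0 for m ≥ 1. Then for every j ≥ 0, (qp)^j = ∑_{m=0}^{⌊j/2⌋} E_{j,m} ħ^{2m} (qp)^{⋆(j−2m)}, where (qp)^{⋆k} denotes the k-fold Moyal star power of (qp). -/
open MvPolynomial

/-- The `k`-fold Moyal star power of `qp`: `(qp)^{⋆0} = 1`,
`(qp)^{⋆(k+1)} = (qp) ⋆ (qp)^{⋆k}`. -/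
noncomputable def spow (hbar : ℝ) : ℕ → MvPolynomial (Fin 2) ℂ
  | 0 => 1
  | (k + 1) => moyal hbar (X 0 * X 1) (spow hbar k)

/-!
Because `qp` is quadratic, `qp ⋆ B` stops at second order:
`qp ⋆ B = qp·B + (iħ/2)(q ∂_q B − p ∂_p B) + (ħ²/4) ∂_p ∂_q B`.
On `B = (qp)^(k+1)` the two Euler operators `q ∂_q` and `p ∂_p` both act as multiplication by
`k + 1`, so `(qp) ⋆ (qp)^(k+1) = (qp)^(k+2) + ħ²(k+1)²/4 · (qp)^k`. Solving for `(qp)^(k+2)` and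
expanding the two lower powers by induction reproduces exactly the recursion of `E`. Since
`E j m = 0` for `2m > j`, the expansion holds summed over any range past `⌊j/2⌋`; stated that
way, the three expansions in the induction step line up term by term.
-/

lemma pdIter_eq_pow_apply (i : Fin 2) (k : ℕ) (A : MvPolynomial (Fin 2) ℂ) :
    pdIter i k A = ((pderiv i).toLinearMap ^ k) A := by
  rw [Module.End.pow_apply]; rfl

noncomputable def moyalMulLeft (hbar : ℝ) (A : MvPolynomial (Fin 2) ℂ) :
    MvPolynomial (Fin 2) ℂ →ₗ[ℂ] MvPolynomial (Fin 2) ℂ where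
  toFun := moyal hbar A
  map_add' B B' := by
    simp only [moyal, moyalD, pdIter_eq_pow_apply, map_add, mul_add, smul_add,
      Finset.sum_add_distrib]
  map_smul' c B := by
    simp only [moyal, moyalD, pdIter_eq_pow_apply, map_smul, mul_smul_comm, Finset.smul_sum,
      RingHom.id_apply]
    simp only [smul_comm c]

lemma moyalMulLeft_apply (hbar : ℝ) (A B : MvPolynomial (Fin 2) ℂ) :
    moyalMulLeft hbar A B = moyal hbar A B := rfl

lemma totalDegree_X_zero_mul_X_one : (X 0 * X 1 : MvPolynomial (Fin 2) ℂ).totalDegree = 2 := by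
  rw [X, X, monomial_mul, one_mul, totalDegree_monomial _ one_ne_zero]
  simp [Finsupp.sum_add_index]

lemma moyal_X_zero_mul_X_one (hbar : ℝ) (B : MvPolynomial (Fin 2) ℂ) :
    moyal hbar (X 0 * X 1) B
      = X 0 * X 1 * B + (Complex.I * hbar / 2) • (X 0 * pderiv 0 B - X 1 * pderiv 1 B)
        + ((hbar : ℂ) ^ 2 / 4) • pderiv 1 (pderiv 0 B) := by
  simp only [moyal, moyalD, totalDegree_X_zero_mul_X_one, Finset.sum_range_succ,
    Finset.sum_range_zero, Nat.reduceSub, pdIter_eq_pow_apply, pow_succ, pow_zero,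
    Module.End.mul_apply, Module.End.one_apply, Derivation.coeFn_coe]
  simp only [pderiv_mul, pderiv_X_self, pderiv_X_of_ne zero_ne_one, pderiv_X_of_ne one_ne_zero]
  norm_num [Nat.factorial]
  match_scalars <;> ring_nf
  rw [Complex.I_sq]
  ring

lemma X_mul_pderiv_pow_of_X_mul_pderiv_eq {σ R : Type*} [CommSemiring R] {i : σ}
    {f : MvPolynomial σ R} (hf : X i * pderiv i f = f) (k : ℕ) :
    X i * pderiv i (f ^ k) = k • f ^ k := by
  cases k with
  | zero => simp
  | succ k =>
    calc X i * pderiv i (f ^ (k + 1)) = (k + 1) • (f ^ k * (X i * pderiv i f)) := by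
          rw [pderiv_pow, Nat.add_sub_cancel, nsmul_eq_mul]; push_cast; ring
      _ = (k + 1) • f ^ (k + 1) := by rw [hf, pow_succ]

lemma X_mul_pderiv_X_zero_mul_X_one_pow (i : Fin 2) (k : ℕ) :
    X i * pderiv i ((X 0 * X 1 : MvPolynomial (Fin 2) ℂ) ^ k) = k • (X 0 * X 1) ^ k := by
  refine X_mul_pderiv_pow_of_X_mul_pderiv_eq ?_ k
  fin_cases i <;> simp [mul_comm]

lemma pderiv_one_pderiv_zero_X_zero_mul_X_one_pow_succ (k : ℕ) :
    pderiv 1 (pderiv 0 ((X 0 * X 1 : MvPolynomial (Fin 2) ℂ) ^ (k + 1)))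
      = (k + 1) ^ 2 • (X 0 * X 1) ^ k := by
  have h0 : pderiv 0 ((X 0 * X 1 : MvPolynomial (Fin 2) ℂ) ^ (k + 1))
      = (k + 1) • ((X 0 * X 1) ^ k * X 1) := by simp
  have h1 := X_mul_pderiv_X_zero_mul_X_one_pow 1 k
  rw [h0, map_nsmul, pderiv_mul, pderiv_X_self, mul_one, mul_comm (pderiv 1 _) (X 1), h1]
  module

lemma moyal_X_zero_mul_X_one_pow_succ (hbar : ℝ) (k : ℕ) :
    moyal hbar (X 0 * X 1) ((X 0 * X 1 : MvPolynomial (Fin 2) ℂ) ^ (k + 1))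
      = (X 0 * X 1) ^ (k + 2) + (((k : ℂ) + 1) ^ 2 * (hbar : ℂ) ^ 2 / 4) • (X 0 * X 1) ^ k := by
  rw [moyal_X_zero_mul_X_one, X_mul_pderiv_X_zero_mul_X_one_pow 0,
    X_mul_pderiv_X_zero_mul_X_one_pow 1, sub_self, smul_zero, add_zero,
    pderiv_one_pderiv_zero_X_zero_mul_X_one_pow_succ, ← Nat.cast_smul_eq_nsmul ℂ, smul_smul,
    ← pow_succ']
  push_cast
  ring_nf

lemma moyal_X_zero_mul_X_one_one (hbar : ℝ) :
    moyal hbar (X 0 * X 1) (1 : MvPolynomial (Fin 2) ℂ) = X 0 * X 1 := by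
  simp [moyal_X_zero_mul_X_one]

lemma moyalMulLeft_spow (hbar : ℝ) (k : ℕ) :
    moyalMulLeft hbar (X 0 * X 1) (spow hbar k) = spow hbar (k + 1) := rfl

lemma coeff_eq_zero_of_lt_two_mul {E : ℕ → ℕ → ℝ}
    (hE0m : ∀ m, 1 ≤ m → E 0 m = 0) (hE1m : ∀ m, 1 ≤ m → E 1 m = 0)
    (hErec : ∀ j m, 1 ≤ j → 1 ≤ m →
      E (j + 1) m = E j m - ((j : ℝ) ^ 2 / 4) * E (j - 1) (m - 1)) :
    ∀ j m, j < 2 * m → E j m = 0 := by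
  intro j
  induction j using Nat.twoStepInduction with
  | zero => exact fun m hm => hE0m m (by omega)
  | one => exact fun m hm => hE1m m (by omega)
  | more n ih ih1 =>
    intro m hm
    rw [hErec (n + 1) m (by omega) (by omega), Nat.add_sub_cancel, ih1 m (by omega),
      ih (m - 1) (by omega), mul_zero, sub_zero]

open Finset in
lemma X_zero_mul_X_one_pow_eq_sum_smul_spow (hbar : ℝ) {E : ℕ → ℕ → ℝ}
    (hE0 : ∀ j, E j 0 = 1)
    (hE0m : ∀ m, 1 ≤ m → E 0 m = 0)
    (hE1m : ∀ m, 1 ≤ m → E 1 m = 0)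
    (hErec : ∀ j m, 1 ≤ j → 1 ≤ m →
      E (j + 1) m = E j m - ((j : ℝ) ^ 2 / 4) * E (j - 1) (m - 1)) :
    ∀ j N, j < 2 * N → (X 0 * X 1 : MvPolynomial (Fin 2) ℂ) ^ j
      = ∑ m ∈ range N, ((E j m : ℂ) * (hbar : ℂ) ^ (2 * m)) • spow hbar (j - 2 * m) := by
  have hvanish := coeff_eq_zero_of_lt_two_mul hE0m hE1m hErec
  intro j
  induction j using Nat.twoStepInduction with
  | zero =>
    rintro (_ | K) hK
    · omega
    · simp [sum_range_succ', hE0m, hE0, spow]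
  | one =>
    rintro (_ | K) hK
    · omega
    · simp [sum_range_succ', hE1m, hE0, spow, moyal_X_zero_mul_X_one_one]
  | more n ih ih1 =>
    rintro (_ | K) hK
    · omega
    have hcoeff : ∀ i, (E (n + 2) (i + 1) : ℂ) * (hbar : ℂ) ^ (2 * (i + 1))
        = (E (n + 1) (i + 1) : ℂ) * (hbar : ℂ) ^ (2 * (i + 1))
          - ((n : ℂ) + 1) ^ 2 * (hbar : ℂ) ^ 2 / 4 * ((E n i : ℂ) * (hbar : ℂ) ^ (2 * i)) := by
      intro i
      rw [hErec (n + 1) (i + 1) (by omega) (by omega)]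
      push_cast
      ring
    have hshift : ∀ m, ((E (n + 1) m : ℂ) * (hbar : ℂ) ^ (2 * m)) • spow hbar (n + 1 - 2 * m + 1)
        = ((E (n + 1) m : ℂ) * (hbar : ℂ) ^ (2 * m)) • spow hbar (n + 2 - 2 * m) := by
      intro m
      -- the two indices differ only when `2 * m > n + 1`, where the coefficient vanishes
      rcases le_or_gt (2 * m) (n + 1) with hm | hm
      · rw [show n + 1 - 2 * m + 1 = n + 2 - 2 * m by omega]
      · simp [hvanish _ _ hm]
    have hidx : ∀ i, n + 2 - 2 * (i + 1) = n - 2 * i := fun i => by omega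
    rw [eq_sub_of_add_eq (moyal_X_zero_mul_X_one_pow_succ hbar n).symm, ← moyalMulLeft_apply,
      ih1 (K + 1) (by omega), ih K (by omega), map_sum, smul_sum]
    simp only [map_smul, moyalMulLeft_spow, hshift, smul_smul]
    rw [sum_range_succ', sum_range_succ']
    simp only [hidx, hcoeff, sub_smul, sum_sub_distrib, hE0]
    abel

/-- with `E_{j,m}` defined by the recursion
`E_{j+1,m} = E_{j,m} − (j²/4)E_{j−1,m−1}` (`j,m ≥ 1`), `E_{j,0} = 1`,
`E_{0,m} = E_{1,m} = 0` for `m ≥ 1`, one has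
`(qp)^j = ∑_{m=0}^{⌊j/2⌋} E_{j,m} ħ^{2m} (qp)^{⋆(j−2m)}`. -/
theorem qp_pow_in_star_powers (hbar : ℝ) (E : ℕ → ℕ → ℝ)
    (hE0 : ∀ j, E j 0 = 1)
    (hE0m : ∀ m, 1 ≤ m → E 0 m = 0)
    (hE1m : ∀ m, 1 ≤ m → E 1 m = 0)
    (hErec : ∀ j m, 1 ≤ j → 1 ≤ m →
      E (j + 1) m = E j m - ((j : ℝ) ^ 2 / 4) * E (j - 1) (m - 1)) :
    ∀ j : ℕ, (X 0 * X 1 : MvPolynomial (Fin 2) ℂ) ^ j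
      = ∑ m ∈ Finset.range (j / 2 + 1),
          MvPolynomial.C ((E j m : ℂ) * (hbar : ℂ) ^ (2 * m)) * spow hbar (j - 2 * m) := by
  intro j
  rw [X_zero_mul_X_one_pow_eq_sum_smul_spow hbar hE0 hE0m hE1m hErec j (j / 2 + 1) (by omega)]
  simp only [smul_eq_C_mul]
end
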